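/- Let A be a 2n×2n real skew-symmetric matrix and θ¹,…,θ^{2n} anticommuting generators of an exterior algebra. Then (∑_{A,B} a_{AB} θ^A θ^B)^n = 2^n n! Pf(a) θ¹θ²⋯θ^{2n}, where Pf(a) is the Pfaffian of a. -/

import Mathlib

open ExteriorAlgebra Matrix

/-!
Expanding the `n`-th power of `∑ a_AB θ^A θ^B` multilinearly gives a sum over all maps
`g : Fin (2n) → Fin (2n)` of `∏ᵢ a_{g(2i) g(2i+1)}` times the monomial
`θ^{g 0} ⋯ θ^{g (2n-1)}`. That monomial is the alternating map `ιMulti` evaluated at `θ ∘ g`,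
so it vanishes unless `g` is a permutation `σ`, where it equals `sgn σ • θ¹⋯θ^{2n}`.
The surviving coefficient
`∑_σ sgn σ ∏ᵢ a_{σ(2i) σ(2i+1)}` is `2^n n! Pf(a)` by the definition of the Pfaffian.
-/

/-- The Pfaffian of a `2n × 2n` real matrix:
`Pf(a) = (1/(2^n n!)) ∑_{σ ∈ S_{2n}} sgn(σ) ∏_{i=1}^n a_{σ(2i−1) σ(2i)}`. -/
noncomputable def pfaffian {n : ℕ} (a : Matrix (Fin (2 * n)) (Fin (2 * n)) ℝ) : ℝ :=
  (1 / ((2 : ℝ) ^ n * n.factorial)) *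
    ∑ σ : Equiv.Perm (Fin (2 * n)),
      ((Equiv.Perm.sign σ : ℤ) : ℝ) *
        ∏ i : Fin n, a (σ ⟨2 * i, by omega⟩) (σ ⟨2 * i + 1, by omega⟩)

theorem two_pow_mul_factorial_mul_pfaffian {n : ℕ} (a : Matrix (Fin (2 * n)) (Fin (2 * n)) ℝ) :
    (2 : ℝ) ^ n * n.factorial * pfaffian a =
      ∑ σ : Equiv.Perm (Fin (2 * n)),
        ((Equiv.Perm.sign σ : ℤ) : ℝ) *
          ∏ i : Fin n, a (σ ⟨2 * i, by omega⟩) (σ ⟨2 * i + 1, by omega⟩) := by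
  rw [pfaffian]
  field_simp

theorem pow_sum_eq_sum_prod_ofFn {A ι : Type*} [Semiring A] [Fintype ι] [DecidableEq ι]
    (y : ι → A) (n : ℕ) : (∑ i, y i) ^ n = ∑ f : Fin n → ι, (List.ofFn (y ∘ f)).prod := by
  rw [← MultilinearMap.mkPiAlgebraFin_apply_const (R := ℕ), MultilinearMap.map_sum]
  rfl

theorem List.prod_ofFn_smul {R A : Type*} [CommSemiring R] [Semiring A] [Algebra R A] {n : ℕ}
    (c : Fin n → R) (x : Fin n → A) :
    (List.ofFn fun i => c i • x i).prod = (∏ i, c i) • (List.ofFn x).prod :=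
  (MultilinearMap.mkPiAlgebraFin R n A).map_smul_univ c x

theorem List.prod_ofFn_two_mul {A : Type*} [Monoid A] {n : ℕ} (x : Fin (2 * n) → A) :
    (List.ofFn x).prod =
      (List.ofFn fun i : Fin n => x ⟨2 * i, by omega⟩ * x ⟨2 * i + 1, by omega⟩).prod := by
  rw [List.ofFn_mul', List.prod_flatten, List.map_ofFn]
  simp [List.ofFn_succ, Function.comp_def]

def Fin.twoMulArrowEquiv (n : ℕ) (α : Type*) : (Fin (2 * n) → α) ≃ (Fin n → α × α) :=
  ((finProdFinEquiv.trans (finCongr (mul_comm n 2))).arrowCongr (Equiv.refl α)).symm.trans <|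
    (Equiv.curry _ _ _).trans (Equiv.piCongrRight fun _ => finTwoArrowEquiv α)

@[simp]
theorem Fin.twoMulArrowEquiv_apply {n : ℕ} {α : Type*} (g : Fin (2 * n) → α) (i : Fin n) :
    Fin.twoMulArrowEquiv n α g i = (g ⟨2 * i, by omega⟩, g ⟨2 * i + 1, by omega⟩) := by
  simp [Fin.twoMulArrowEquiv, finProdFinEquiv, add_comm 1]

theorem pow_sum_sum_smul_mul {R A ι : Type*} [CommSemiring R] [Semiring A] [Algebra R A]
    [Fintype ι] [DecidableEq ι] (a : Matrix ι ι R) (x : ι → A) (n : ℕ) :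
    (∑ i, ∑ j, a i j • (x i * x j)) ^ n =
      ∑ g : Fin (2 * n) → ι,
        (∏ i : Fin n, a (g ⟨2 * i, by omega⟩) (g ⟨2 * i + 1, by omega⟩)) •
          (List.ofFn (x ∘ g)).prod := by
  rw [← Fintype.sum_prod_type', pow_sum_eq_sum_prod_ofFn,
    ← (Fin.twoMulArrowEquiv n ι).sum_comp]
  refine Fintype.sum_congr _ _ fun g => ?_
  rw [Function.comp_def, List.prod_ofFn_smul, List.prod_ofFn_two_mul]
  simp

theorem AlternatingMap.sum_smul_map_comp {R M N ι : Type*} [CommRing R] [AddCommMonoid M]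
    [Module R M] [AddCommGroup N] [Module R N] [Fintype ι] [DecidableEq ι]
    (f : M [⋀^ι]→ₗ[R] N) (v : ι → M) (c : (ι → ι) → R) :
    ∑ g : ι → ι, c g • f (v ∘ g) =
      (∑ σ : Equiv.Perm ι, ((Equiv.Perm.sign σ : ℤ) : R) * c σ) • f v := by
  rw [Finset.sum_smul]
  symm
  refine Fintype.sum_of_injective (fun σ : Equiv.Perm ι => ⇑σ) DFunLike.coe_injective _ _ ?_ ?_
  · rintro g hg
    have hg_inj : ¬ Function.Injective g := fun h =>
      hg ⟨Equiv.ofBijective g h.bijective_of_finite, rfl⟩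
    rw [f.map_eq_zero_of_not_injective _ fun h => hg_inj h.of_comp, smul_zero]
  · intro σ
    rw [f.map_perm, mul_comm, mul_smul, Units.smul_def, Int.cast_smul_eq_zsmul]

theorem grassmann_gaussian_pfaffian_general {n : ℕ}
    (a : Matrix (Fin (2 * n)) (Fin (2 * n)) ℝ) :
    let θ : Fin (2 * n) → ExteriorAlgebra ℝ (Fin (2 * n) → ℝ) :=
      fun A => ExteriorAlgebra.ι ℝ (Pi.single A (1 : ℝ))
    (∑ A : Fin (2 * n), ∑ B : Fin (2 * n), a A B • (θ A * θ B)) ^ n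
      = ((2 : ℝ) ^ n * n.factorial * pfaffian a) • (List.ofFn θ).prod := by
  intro θ
  let e : Fin (2 * n) → Fin (2 * n) → ℝ := fun A => Pi.single A 1
  have hθ : ∀ g : Fin (2 * n) → Fin (2 * n), (List.ofFn (θ ∘ g)).prod = ιMulti ℝ _ (e ∘ g) :=
    fun g => (ιMulti_apply _).symm
  rw [pow_sum_sum_smul_mul]
  simp_rw [hθ]
  rw [AlternatingMap.sum_smul_map_comp, ← two_pow_mul_factorial_mul_pfaffian,
    ιMulti_apply]

theorem grassmann_gaussian_pfaffian {n : ℕ}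
    (a : Matrix (Fin (2 * n)) (Fin (2 * n)) ℝ)
    (hskew : aᵀ = -a) :
    let θ : Fin (2 * n) → ExteriorAlgebra ℝ (Fin (2 * n) → ℝ) :=
      fun A => ExteriorAlgebra.ι ℝ (Pi.single A (1 : ℝ))
    (∑ A : Fin (2 * n), ∑ B : Fin (2 * n), a A B • (θ A * θ B)) ^ n
      = ((2 : ℝ) ^ n * n.factorial * pfaffian a) • (List.ofFn θ).prod :=
  grassmann_gaussian_pfaffian_general a
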